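/- Let H₁ : ℝ → ℝ be continuous and 2π-periodic, and let ω₁ be irrational. Then for all (q, u) ∈ ℝ², the weak-* limit (two-scale average over the fast variable) of σ ↦ sin(σ)·H₁(ω₁σ)·(cos(σ)·q + sin(σ)·u): specifically, lim_{T→∞} (1/T)∫₀^T sin(σ)·H₁(ω₁·σ)·(cos(σ)·q + sin(σ)·u) dσ = (Ĥ₁(0))·(u/2), where Ĥ₁(0) = (1/(2π))∫₀^{2π} H₁ is the mean of H₁ — in particular if H₁ has zero mean the limit vanishes. -/

import Mathlib

open Real Filter MeasureTheory intervalIntegral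

noncomputable section ErgAux

private lemma avgC (c : ℂ) :
    Tendsto (fun T : ℝ => (1 / T : ℂ) * ∫ _σ in (0:ℝ)..T, c) atTop (nhds c) := by
  have h : ∀ᶠ T : ℝ in atTop, (1 / T : ℂ) * (∫ _σ in (0:ℝ)..T, c) = c := by
    filter_upwards [eventually_gt_atTop (0:ℝ)] with T hT
    rw [intervalIntegral.integral_const, sub_zero, Complex.real_smul]
    have : (T:ℂ) ≠ 0 := Complex.ofReal_ne_zero.2 hT.ne'
    field_simp
  exact tendsto_const_nhds.congr' (h.mono fun T hT => hT.symm)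

private lemma avgE {b : ℝ} (hb : b ≠ 0) :
    Tendsto (fun T : ℝ => (1 / T : ℂ) * ∫ σ in (0:ℝ)..T, Complex.exp ((b * Complex.I) * σ))
      atTop (nhds 0) := by
  have hc : (b : ℂ) * Complex.I ≠ 0 := mul_ne_zero (Complex.ofReal_ne_zero.2 hb) Complex.I_ne_zero
  have hbound : ∀ T : ℝ, ‖∫ σ in (0:ℝ)..T, Complex.exp ((b * Complex.I) * σ)‖ ≤ 2 / |b| := by
    intro T
    rw [integral_exp_mul_complex hc, norm_div]
    have h1 : ‖(b:ℂ) * Complex.I‖ = |b| := by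
      rw [norm_mul, Complex.norm_real, Complex.norm_I, Real.norm_eq_abs, mul_one]
    have h2 : ∀ t : ℝ, ‖Complex.exp ((b:ℂ) * Complex.I * t)‖ = 1 := by
      intro t
      rw [show ((b:ℂ) * Complex.I * t) = ((b*t : ℝ):ℂ) * Complex.I by push_cast; ring]
      exact Complex.norm_exp_ofReal_mul_I _
    rw [h1]
    gcongr
    calc ‖Complex.exp ((b:ℂ)*Complex.I*(T:ℝ)) - Complex.exp ((b:ℂ)*Complex.I*((0:ℝ):ℂ))‖
        ≤ ‖Complex.exp ((b:ℂ)*Complex.I*(T:ℝ))‖ + ‖Complex.exp ((b:ℂ)*Complex.I*((0:ℝ):ℂ))‖ :=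
          norm_sub_le _ _
      _ ≤ 2 := by rw [h2 T, h2 0]; norm_num
  apply squeeze_zero_norm' (a := fun T : ℝ => (1/T) * (2/|b|))
  · filter_upwards [eventually_ge_atTop (1:ℝ)] with T hT
    have hT0 : (0:ℝ) < T := by linarith
    have hn : ‖(1/(T:ℂ))‖ = 1/T := by
      rw [norm_div, norm_one, Complex.norm_real, Real.norm_eq_abs, abs_of_pos hT0]
    rw [norm_mul, hn]
    exact mul_le_mul_of_nonneg_left (hbound T) (by positivity)
  · have := tendsto_inv_atTop_zero (𝕜 := ℝ)
    simpa [one_div] using this.mul_const (2/|b|)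

private lemma avgE' (b : ℝ) :
    Tendsto (fun T : ℝ => (1 / T : ℂ) * ∫ σ in (0:ℝ)..T, Complex.exp ((b * Complex.I) * σ))
      atTop (nhds (if b = 0 then 1 else 0)) := by
  by_cases hb : b = 0
  · subst hb
    simp only [if_pos rfl, Complex.ofReal_zero, zero_mul]
    simpa using avgC 1
  · simpa only [if_neg hb] using avgE hb

private lemma decomp (b q u σ : ℝ) :
    Complex.exp ((b*Complex.I)*σ) * ((Real.sin σ * (Real.cos σ * q + Real.sin σ * u) : ℝ) : ℂ)
      = (-(Complex.I*q)/4 - u/4) * Complex.exp (((b+2:ℝ)*Complex.I)*σ)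
      + ((Complex.I*q)/4 - u/4) * Complex.exp (((b-2:ℝ)*Complex.I)*σ)
      + ((u:ℂ)/2) * Complex.exp ((b*Complex.I)*σ) := by
  have e1 : Complex.exp (((b+2:ℝ)*Complex.I)*σ)
      = Complex.exp ((b*Complex.I)*σ) * Complex.exp (((2*σ:ℝ):ℂ) * Complex.I) := by
    rw [← Complex.exp_add]; push_cast; ring_nf
  have e2 : Complex.exp (((b-2:ℝ)*Complex.I)*σ)
      = Complex.exp ((b*Complex.I)*σ) * Complex.exp (((-(2*σ):ℝ):ℂ) * Complex.I) := by
    rw [← Complex.exp_add]; push_cast; ring_nf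
  rw [e1, e2, Complex.exp_mul_I, Complex.exp_mul_I]
  rw [← Complex.ofReal_cos, ← Complex.ofReal_sin, ← Complex.ofReal_cos, ← Complex.ofReal_sin]
  rw [Real.cos_neg, Real.sin_neg, Real.cos_two_mul, Real.sin_two_mul]
  set E := Complex.exp ((b*Complex.I)*σ)
  have hsc : (Complex.sin σ)^2 + (Complex.cos σ)^2 = 1 := Complex.sin_sq_add_cos_sq _
  push_cast
  linear_combination (E*u) * hsc + (E*q*(Complex.sin σ)*(Complex.cos σ)) * Complex.I_sq

private lemma mono (q u b : ℝ) (h2 : b + 2 ≠ 0) (h2' : b - 2 ≠ 0) :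
    Tendsto (fun T : ℝ => (1 / T : ℂ) * ∫ σ in (0:ℝ)..T,
        Complex.exp ((b * Complex.I) * σ)
          * ((Real.sin σ * (Real.cos σ * q + Real.sin σ * u) : ℝ) : ℂ))
      atTop (nhds ((if b = 0 then 1 else 0) * ((u:ℂ)/2))) := by
  have iE : ∀ (a : ℝ) (c : ℂ) (T : ℝ), IntervalIntegrable
      (fun σ : ℝ => c * Complex.exp ((a * Complex.I) * σ)) volume 0 T := by
    intro a c T
    exact (Continuous.mul continuous_const (Complex.continuous_exp.comp
      (continuous_const.mul Complex.continuous_ofReal))).intervalIntegrable _ _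
  have hfun : (fun T : ℝ => (1 / T : ℂ) * ∫ σ in (0:ℝ)..T,
        Complex.exp ((b * Complex.I) * σ)
          * ((Real.sin σ * (Real.cos σ * q + Real.sin σ * u) : ℝ) : ℂ))
      = fun T : ℝ =>
        (-(Complex.I*q)/4 - u/4) * ((1/T:ℂ) * ∫ σ in (0:ℝ)..T, Complex.exp (((b+2:ℝ)*Complex.I)*σ))
      + ((Complex.I*q)/4 - u/4) * ((1/T:ℂ) * ∫ σ in (0:ℝ)..T, Complex.exp (((b-2:ℝ)*Complex.I)*σ))
      + ((u:ℂ)/2) * ((1/T:ℂ) * ∫ σ in (0:ℝ)..T, Complex.exp ((b*Complex.I)*σ)) := by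
    funext T
    rw [intervalIntegral.integral_congr (g := fun σ : ℝ =>
        (-(Complex.I*q)/4 - u/4) * Complex.exp (((b+2:ℝ)*Complex.I)*σ)
      + ((Complex.I*q)/4 - u/4) * Complex.exp (((b-2:ℝ)*Complex.I)*σ)
      + ((u:ℂ)/2) * Complex.exp ((b*Complex.I)*σ)) (fun σ _ => decomp b q u σ)]
    rw [intervalIntegral.integral_add ((iE _ _ _).add (iE _ _ _)) (iE _ _ _),
        intervalIntegral.integral_add (iE _ _ _) (iE _ _ _),
        intervalIntegral.integral_const_mul, intervalIntegral.integral_const_mul,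
        intervalIntegral.integral_const_mul]
    ring
  rw [hfun, show ((if b = 0 then (1:ℂ) else 0) * ((u:ℂ)/2))
      = (-(Complex.I*(q:ℂ))/4 - (u:ℂ)/4) * 0 + ((Complex.I*(q:ℂ))/4 - (u:ℂ)/4) * 0
        + ((u:ℂ)/2) * (if b = 0 then (1:ℂ) else 0) by ring]
  exact (((avgE h2).const_mul _).add ((avgE h2').const_mul _)).add ((avgE' b).const_mul _)

instance : Fact (0 < 2 * π) := ⟨Real.two_pi_pos⟩

private lemma keySpan (ω₁ : ℝ) (hirr : Irrational ω₁) (q u : ℝ) :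
    ∀ F ∈ Submodule.span ℂ (Set.range (@fourier (2*π))),
      Tendsto (fun T : ℝ => (1/T:ℂ) * ∫ σ in (0:ℝ)..T,
          F ((ω₁*σ : ℝ) : AddCircle (2*π))
            * ((Real.sin σ * (Real.cos σ * q + Real.sin σ * u) : ℝ) : ℂ))
        atTop
        (nhds (((1/((2*π:ℝ)):ℂ) * ∫ σ in (0:ℝ)..(2*π), F ((σ:ℝ) : AddCircle (2*π))) * ((u:ℂ)/2))) := by
  have hGc : Continuous (fun σ : ℝ => Real.sin σ * (Real.cos σ * q + Real.sin σ * u)) := by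
    fun_prop
  have hcoe : Continuous (fun σ : ℝ => ((ω₁*σ : ℝ) : AddCircle (2*π))) :=
    (AddCircle.continuous_mk' _).comp (continuous_const.mul continuous_id)
  have hic : ∀ (F : C(AddCircle (2*π), ℂ)) (a b : ℝ),
      IntervalIntegrable (fun σ : ℝ => F ((ω₁*σ:ℝ) : AddCircle (2*π))
        * ((Real.sin σ * (Real.cos σ * q + Real.sin σ * u) : ℝ):ℂ)) volume a b :=
    fun F a b => ((F.continuous.comp hcoe).mul
      (Complex.continuous_ofReal.comp hGc)).intervalIntegrable _ _
  have hic2 : ∀ (F : C(AddCircle (2*π), ℂ)) (a b : ℝ),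
      IntervalIntegrable (fun σ : ℝ => F ((σ:ℝ) : AddCircle (2*π))) volume a b :=
    fun F a b => (F.continuous.comp (AddCircle.continuous_mk' _)).intervalIntegrable _ _
  intro F hF
  induction hF using Submodule.span_induction with
  | mem F hF =>
    obtain ⟨n, rfl⟩ := hF
    have hval : ∀ x : ℝ, fourier n (x : AddCircle (2*π))
        = Complex.exp ((((n:ℝ)) * Complex.I) * x) := by
      intro x
      rw [fourier_coe_apply]
      congr 1
      have hπ : (π:ℂ) ≠ 0 := Complex.ofReal_ne_zero.2 Real.pi_ne_zero
      field_simp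
      push_cast
      ring
    have hω : ω₁ ≠ 0 := by
      intro h
      exact (hirr.ne_int 0) (by simp [h])
    have hmean : ((1/((2*π:ℝ)):ℂ) * ∫ σ in (0:ℝ)..(2*π), fourier n ((σ:ℝ) : AddCircle (2*π)))
        = if ((n:ℝ)*ω₁) = 0 then 1 else 0 := by
      simp only [hval]
      by_cases hn : n = 0
      · subst hn
        simp only [Int.cast_zero, Complex.ofReal_zero, zero_mul, Complex.exp_zero]
        rw [intervalIntegral.integral_const, sub_zero, Complex.real_smul]
        have h2π : ((2*π:ℝ):ℂ) ≠ 0 := Complex.ofReal_ne_zero.2 Real.two_pi_pos.ne'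
        rw [if_pos (by simp)]
        rw [div_mul_eq_mul_div, one_mul, mul_one, div_self h2π]
      · have hc : ((n:ℝ):ℂ) * Complex.I ≠ 0 :=
          mul_ne_zero (Complex.ofReal_ne_zero.2 (by exact_mod_cast hn)) Complex.I_ne_zero
        rw [integral_exp_mul_complex hc,
          if_neg (by simp [mul_eq_zero, hω]; exact_mod_cast hn)]
        have h1 : Complex.exp (((n:ℝ):ℂ) * Complex.I * ((2*π:ℝ):ℂ)) = 1 := by
          rw [show (((n:ℝ):ℂ) * Complex.I * ((2*π:ℝ):ℂ)) = (n:ℂ) * (2*(π:ℂ)*Complex.I) by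
            push_cast; ring]
          exact Complex.exp_int_mul_two_pi_mul_I n
        rw [h1]
        simp
    have hb2 : (n:ℝ)*ω₁ + 2 ≠ 0 := by
      by_cases hn : n = 0
      · subst hn; norm_num
      · have h := (hirr.intCast_mul hn).ne_int (-2)
        intro hcon
        apply h
        push_cast
        linarith
    have hb2' : (n:ℝ)*ω₁ - 2 ≠ 0 := by
      by_cases hn : n = 0
      · subst hn; norm_num
      · have h := (hirr.intCast_mul hn).ne_int 2
        intro hcon
        apply h
        push_cast
        linarith
    rw [hmean]
    refine (mono q u ((n:ℝ)*ω₁) hb2 hb2').congr (fun T => ?_)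
    congr 1
    apply intervalIntegral.integral_congr
    intro σ _
    dsimp only
    rw [hval (ω₁*σ)]
    congr 2
    push_cast
    ring
  | zero =>
    simp only [ContinuousMap.zero_apply, zero_mul, intervalIntegral.integral_zero, mul_zero]
    exact tendsto_const_nhds
  | add x y hx hy ihx ihy =>
    have hfun : ∀ T : ℝ, (1/T:ℂ) * ∫ σ in (0:ℝ)..T, (x+y) ((ω₁*σ:ℝ) : AddCircle (2*π))
          * ((Real.sin σ * (Real.cos σ * q + Real.sin σ * u) : ℝ):ℂ)
        = ((1/T:ℂ) * ∫ σ in (0:ℝ)..T, x ((ω₁*σ:ℝ) : AddCircle (2*π))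
          * ((Real.sin σ * (Real.cos σ * q + Real.sin σ * u) : ℝ):ℂ))
        + ((1/T:ℂ) * ∫ σ in (0:ℝ)..T, y ((ω₁*σ:ℝ) : AddCircle (2*π))
          * ((Real.sin σ * (Real.cos σ * q + Real.sin σ * u) : ℝ):ℂ)) := by
      intro T
      simp only [ContinuousMap.add_apply, add_mul]
      rw [intervalIntegral.integral_add (hic x 0 T) (hic y 0 T), mul_add]
    have hmadd : ((1/((2*π:ℝ)):ℂ) * ∫ σ in (0:ℝ)..(2*π), (x+y) ((σ:ℝ) : AddCircle (2*π)))
        = ((1/((2*π:ℝ)):ℂ) * ∫ σ in (0:ℝ)..(2*π), x ((σ:ℝ) : AddCircle (2*π)))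
        + ((1/((2*π:ℝ)):ℂ) * ∫ σ in (0:ℝ)..(2*π), y ((σ:ℝ) : AddCircle (2*π))) := by
      simp only [ContinuousMap.add_apply]
      rw [intervalIntegral.integral_add (hic2 x _ _) (hic2 y _ _), mul_add]
    rw [hmadd, add_mul]
    exact (ihx.add ihy).congr (fun T => (hfun T).symm)
  | smul c x hx ih =>
    have hfun : ∀ T : ℝ, (1/T:ℂ) * ∫ σ in (0:ℝ)..T, (c • x) ((ω₁*σ:ℝ) : AddCircle (2*π))
          * ((Real.sin σ * (Real.cos σ * q + Real.sin σ * u) : ℝ):ℂ)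
        = c * ((1/T:ℂ) * ∫ σ in (0:ℝ)..T, x ((ω₁*σ:ℝ) : AddCircle (2*π))
          * ((Real.sin σ * (Real.cos σ * q + Real.sin σ * u) : ℝ):ℂ)) := by
      intro T
      simp only [ContinuousMap.smul_apply, smul_eq_mul, mul_assoc]
      rw [intervalIntegral.integral_const_mul]
      ring
    have hms : ((1/((2*π:ℝ)):ℂ) * ∫ σ in (0:ℝ)..(2*π), (c • x) ((σ:ℝ) : AddCircle (2*π)))
        = c * ((1/((2*π:ℝ)):ℂ) * ∫ σ in (0:ℝ)..(2*π), x ((σ:ℝ) : AddCircle (2*π))) := by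
      simp only [ContinuousMap.smul_apply, smul_eq_mul]
      rw [intervalIntegral.integral_const_mul]
      ring
    rw [hms, mul_assoc]
    exact (ih.const_mul c).congr (fun T => (hfun T).symm)


theorem ergodic_average_nonresonant
    (H₁ : ℝ → ℝ) (hcont : Continuous H₁) (hper : ∀ τ : ℝ, H₁ (τ + 2 * π) = H₁ τ)
    (ω₁ : ℝ) (hirr : Irrational ω₁) (q u : ℝ) :
    Tendsto (fun T : ℝ =>
        (1 / T) * ∫ σ in (0:ℝ)..T, sin σ * H₁ (ω₁ * σ) * (cos σ * q + sin σ * u))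
      atTop
      (nhds (((1 / (2 * π)) * ∫ σ in (0:ℝ)..(2 * π), H₁ σ) * (u / 2))) := by
  have hGc : Continuous (fun σ : ℝ => Real.sin σ * (Real.cos σ * q + Real.sin σ * u)) := by
    fun_prop
  have hcoe : Continuous (fun σ : ℝ => ((ω₁*σ : ℝ) : AddCircle (2*π))) :=
    (AddCircle.continuous_mk' _).comp (continuous_const.mul continuous_id)
  have hic : ∀ (F : C(AddCircle (2*π), ℂ)) (a b : ℝ),
      IntervalIntegrable (fun σ : ℝ => F ((ω₁*σ:ℝ) : AddCircle (2*π))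
        * ((Real.sin σ * (Real.cos σ * q + Real.sin σ * u) : ℝ):ℂ)) volume a b :=
    fun F a b => ((F.continuous.comp hcoe).mul
      (Complex.continuous_ofReal.comp hGc)).intervalIntegrable _ _
  have hic2 : ∀ (F : C(AddCircle (2*π), ℂ)) (a b : ℝ),
      IntervalIntegrable (fun σ : ℝ => F ((σ:ℝ) : AddCircle (2*π))) volume a b :=
    fun F a b => (F.continuous.comp (AddCircle.continuous_mk' _)).intervalIntegrable _ _
  have hGb : ∀ σ : ℝ, |Real.sin σ * (Real.cos σ * q + Real.sin σ * u)| ≤ |q| + |u| := by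
    intro σ
    rw [abs_mul]
    have hs : |Real.sin σ| ≤ 1 := Real.abs_sin_le_one σ
    have hc : |Real.cos σ| ≤ 1 := Real.abs_cos_le_one σ
    have h2 : |Real.cos σ * q + Real.sin σ * u| ≤ |q| + |u| := by
      calc |Real.cos σ * q + Real.sin σ * u| ≤ |Real.cos σ * q| + |Real.sin σ * u| :=
            abs_add_le _ _
        _ ≤ |q| + |u| := by
            rw [abs_mul, abs_mul]
            have := abs_nonneg q; have := abs_nonneg u
            nlinarith
    calc |Real.sin σ| * |Real.cos σ * q + Real.sin σ * u| ≤ 1 * (|q| + |u|) :=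
          mul_le_mul hs h2 (abs_nonneg _) one_pos.le
      _ = |q| + |u| := one_mul _
  -- lift of H₁ to the circle
  have hper2 : Function.Periodic (fun τ : ℝ => ((H₁ τ : ℝ) : ℂ)) (2*π) := fun τ => by
    simp [hper τ]
  have hcl : Continuous (hper2.lift) := (Complex.continuous_ofReal.comp hcont).quotient_liftOn' _
  let F₀ : C(AddCircle (2*π), ℂ) := ⟨hper2.lift, hcl⟩
  have hF₀ : ∀ x : ℝ, F₀ ((x:ℝ) : AddCircle (2*π)) = ((H₁ x : ℝ) : ℂ) := fun x => rfl
  have hmem : F₀ ∈ closure ((Submodule.span ℂ (Set.range (@fourier (2*π)))) : Set _) := by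
    have h := span_fourier_closure_eq_top (T := 2*π)
    have h1 : F₀ ∈ (Submodule.span ℂ (Set.range (@fourier (2*π)))).topologicalClosure := by
      rw [h]; trivial
    rwa [← Submodule.topologicalClosure_coe]
  -- the limit statement for F₀
  have hprop : Tendsto (fun T : ℝ => (1/T:ℂ) * ∫ σ in (0:ℝ)..T,
        F₀ ((ω₁*σ : ℝ) : AddCircle (2*π))
          * ((Real.sin σ * (Real.cos σ * q + Real.sin σ * u) : ℝ) : ℂ))
      atTop
      (nhds (((1/((2*π:ℝ)):ℂ) * ∫ σ in (0:ℝ)..(2*π), F₀ ((σ:ℝ) : AddCircle (2*π))) * ((u:ℂ)/2))) := by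
    rw [Metric.tendsto_nhds]
    intro ε hε
    set C : ℝ := |q| + |u| + |u|/2 + 1 with hCdef
    have hC : 0 < C := by positivity
    set δ : ℝ := ε / (2*C) with hδdef
    have hδ : 0 < δ := by positivity
    obtain ⟨P, hPmem, hPdist⟩ := Metric.mem_closure_iff.mp hmem δ hδ
    set D : ℝ := dist F₀ P with hDdef
    have hD0 : 0 ≤ D := dist_nonneg
    have hPt := keySpan ω₁ hirr q u P hPmem
    have hPev := Metric.tendsto_nhds.mp hPt (ε/2) (by positivity)
    -- estimate on the means
    have hBmean : ‖((1/((2*π:ℝ)):ℂ) * ∫ σ in (0:ℝ)..(2*π), F₀ ((σ:ℝ) : AddCircle (2*π)))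
        - ((1/((2*π:ℝ)):ℂ) * ∫ σ in (0:ℝ)..(2*π), P ((σ:ℝ) : AddCircle (2*π)))‖ ≤ D := by
      rw [← mul_sub, ← intervalIntegral.integral_sub (hic2 F₀ _ _) (hic2 P _ _), norm_mul]
      have hint : ‖∫ σ in (0:ℝ)..(2*π), (F₀ ((σ:ℝ) : AddCircle (2*π))
          - P ((σ:ℝ) : AddCircle (2*π)))‖ ≤ D * |2*π - 0| := by
        apply intervalIntegral.norm_integral_le_of_norm_le_const
        intro σ _
        rw [← dist_eq_norm]
        exact ContinuousMap.dist_apply_le_dist _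
      have hn : ‖(1/((2*π:ℝ)):ℂ)‖ = 1/(2*π) := by
        rw [norm_div, norm_one, Complex.norm_real, Real.norm_eq_abs,
          abs_of_pos Real.two_pi_pos]
      rw [hn]
      calc (1/(2*π)) * ‖∫ σ in (0:ℝ)..(2*π), (F₀ ((σ:ℝ) : AddCircle (2*π))
            - P ((σ:ℝ) : AddCircle (2*π)))‖
          ≤ (1/(2*π)) * (D * |2*π - 0|) :=
            mul_le_mul_of_nonneg_left hint (by positivity)
        _ = D := by
            rw [sub_zero, abs_of_pos Real.two_pi_pos]
            field_simp
    have hB : dist (((1/((2*π:ℝ)):ℂ) * ∫ σ in (0:ℝ)..(2*π), P ((σ:ℝ) : AddCircle (2*π))) * ((u:ℂ)/2))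
        (((1/((2*π:ℝ)):ℂ) * ∫ σ in (0:ℝ)..(2*π), F₀ ((σ:ℝ) : AddCircle (2*π))) * ((u:ℂ)/2))
        ≤ D * (|u|/2) := by
      rw [dist_eq_norm, ← sub_mul, norm_mul]
      have hu : ‖((u:ℂ)/2)‖ = |u|/2 := by
        rw [show ((u:ℂ)/2) = (((u/2 : ℝ)):ℂ) by push_cast; ring, Complex.norm_real,
          Real.norm_eq_abs, abs_div, abs_two]
      rw [hu]
      apply mul_le_mul_of_nonneg_right _ (by positivity)
      rw [norm_sub_rev]
      exact hBmean
    filter_upwards [hPev, eventually_ge_atTop (1:ℝ)] with T hT1 hT2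
    have hT0 : (0:ℝ) < T := lt_of_lt_of_le one_pos hT2
    -- estimate on the averages
    have hA : dist ((1/T:ℂ) * ∫ σ in (0:ℝ)..T, F₀ ((ω₁*σ:ℝ) : AddCircle (2*π))
          * ((Real.sin σ * (Real.cos σ * q + Real.sin σ * u) : ℝ):ℂ))
        ((1/T:ℂ) * ∫ σ in (0:ℝ)..T, P ((ω₁*σ:ℝ) : AddCircle (2*π))
          * ((Real.sin σ * (Real.cos σ * q + Real.sin σ * u) : ℝ):ℂ))
        ≤ D * (|q| + |u|) := by
      rw [dist_eq_norm, ← mul_sub, ← intervalIntegral.integral_sub (hic F₀ 0 T) (hic P 0 T),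
        norm_mul]
      have hint : ‖∫ σ in (0:ℝ)..T, (F₀ ((ω₁*σ:ℝ) : AddCircle (2*π))
            * ((Real.sin σ * (Real.cos σ * q + Real.sin σ * u) : ℝ):ℂ)
          - P ((ω₁*σ:ℝ) : AddCircle (2*π))
            * ((Real.sin σ * (Real.cos σ * q + Real.sin σ * u) : ℝ):ℂ))‖
          ≤ (D * (|q| + |u|)) * |T - 0| := by
        apply intervalIntegral.norm_integral_le_of_norm_le_const
        intro σ _
        rw [← sub_mul, norm_mul, Complex.norm_real, Real.norm_eq_abs]
        have h1 : ‖F₀ ((ω₁*σ:ℝ) : AddCircle (2*π)) - P ((ω₁*σ:ℝ) : AddCircle (2*π))‖ ≤ D := by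
          rw [← dist_eq_norm]
          exact ContinuousMap.dist_apply_le_dist _
        exact mul_le_mul h1 (hGb σ) (abs_nonneg _) hD0
      have hn : ‖(1/(T:ℂ))‖ = 1/T := by
        rw [norm_div, norm_one, Complex.norm_real, Real.norm_eq_abs, abs_of_pos hT0]
      rw [hn]
      calc (1/T) * ‖∫ σ in (0:ℝ)..T, (F₀ ((ω₁*σ:ℝ) : AddCircle (2*π))
            * ((Real.sin σ * (Real.cos σ * q + Real.sin σ * u) : ℝ):ℂ)
          - P ((ω₁*σ:ℝ) : AddCircle (2*π))
            * ((Real.sin σ * (Real.cos σ * q + Real.sin σ * u) : ℝ):ℂ))‖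
          ≤ (1/T) * ((D * (|q| + |u|)) * |T - 0|) :=
            mul_le_mul_of_nonneg_left hint (by positivity)
        _ = D * (|q| + |u|) := by
            rw [sub_zero, abs_of_pos hT0]
            field_simp
    have htri := dist_triangle4
      ((1/T:ℂ) * ∫ σ in (0:ℝ)..T, F₀ ((ω₁*σ:ℝ) : AddCircle (2*π))
          * ((Real.sin σ * (Real.cos σ * q + Real.sin σ * u) : ℝ):ℂ))
      ((1/T:ℂ) * ∫ σ in (0:ℝ)..T, P ((ω₁*σ:ℝ) : AddCircle (2*π))
          * ((Real.sin σ * (Real.cos σ * q + Real.sin σ * u) : ℝ):ℂ))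
      (((1/((2*π:ℝ)):ℂ) * ∫ σ in (0:ℝ)..(2*π), P ((σ:ℝ) : AddCircle (2*π))) * ((u:ℂ)/2))
      (((1/((2*π:ℝ)):ℂ) * ∫ σ in (0:ℝ)..(2*π), F₀ ((σ:ℝ) : AddCircle (2*π))) * ((u:ℂ)/2))
    have hmul1 : D * (|q| + |u|) ≤ δ * (|q| + |u|) :=
      mul_le_mul_of_nonneg_right hPdist.le (by positivity)
    have hmul2 : D * (|u|/2) ≤ δ * (|u|/2) :=
      mul_le_mul_of_nonneg_right hPdist.le (by positivity)
    have hδC : δ * C = ε/2 := by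
      rw [hδdef]
      field_simp
    have hsum : δ * (|q| + |u|) + δ * (|u|/2) = δ * C - δ := by
      rw [hCdef]; ring
    linarith [hA, hB, hT1]
  -- convert the complex statement to the real one
  have heq : ∀ T : ℝ, (1/T:ℂ) * ∫ σ in (0:ℝ)..T, F₀ ((ω₁*σ : ℝ) : AddCircle (2*π))
        * ((Real.sin σ * (Real.cos σ * q + Real.sin σ * u) : ℝ) : ℂ)
      = ((((1/T) * ∫ σ in (0:ℝ)..T,
          Real.sin σ * H₁ (ω₁*σ) * (Real.cos σ * q + Real.sin σ * u)) : ℝ) : ℂ) := by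
    intro T
    rw [show (fun σ : ℝ => F₀ ((ω₁*σ:ℝ) : AddCircle (2*π))
          * ((Real.sin σ * (Real.cos σ * q + Real.sin σ * u) : ℝ):ℂ))
        = fun σ : ℝ => ((Real.sin σ * H₁ (ω₁*σ) * (Real.cos σ * q + Real.sin σ * u) : ℝ):ℂ) from
      funext fun σ => by rw [hF₀ (ω₁*σ)]; push_cast; ring]
    rw [intervalIntegral.integral_ofReal]
    push_cast
    ring
  have hmeq : ((1/((2*π:ℝ)):ℂ) * ∫ σ in (0:ℝ)..(2*π), F₀ ((σ:ℝ) : AddCircle (2*π)))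
      = ((((1/(2*π)) * ∫ σ in (0:ℝ)..(2*π), H₁ σ) : ℝ) : ℂ) := by
    rw [show (fun σ : ℝ => F₀ ((σ:ℝ) : AddCircle (2*π))) = fun σ : ℝ => ((H₁ σ : ℝ):ℂ) from
      funext fun σ => hF₀ σ]
    rw [intervalIntegral.integral_ofReal]
    push_cast
    ring
  have h2 : Tendsto (fun T : ℝ => ((((1/T) * ∫ σ in (0:ℝ)..T,
        Real.sin σ * H₁ (ω₁*σ) * (Real.cos σ * q + Real.sin σ * u)) : ℝ) : ℂ))
      atTop
      (nhds (((((1/(2*π)) * ∫ σ in (0:ℝ)..(2*π), H₁ σ) * (u/2) : ℝ)) : ℂ)) := by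
    have hlim : (((1/((2*π:ℝ)):ℂ) * ∫ σ in (0:ℝ)..(2*π), F₀ ((σ:ℝ) : AddCircle (2*π))) * ((u:ℂ)/2))
        = ((((1/(2*π)) * ∫ σ in (0:ℝ)..(2*π), H₁ σ) * (u/2) : ℝ) : ℂ) := by
      rw [hmeq]; push_cast; ring
    rw [← funext heq, ← hlim]
    exact hprop
  exact Filter.tendsto_ofReal_iff.mp h2

end ErgAux
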